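/- Let ⟨A, Δ⟩ be a Jordan coalgebra over a field k of characteristic not 2 whose dual algebra A* is unital. For every l* ∈ L(A*) and l ∈ L(A) there exists an element i of the ideal I(A*) = A* ⊕ (A*)' ⊕ IntDer(A*) ⊕ Ā* of L(A*) satisfying [l, l*] = [l, i] (as module actions on L(A)) and ⟨l*, l⟩ = ⟨i, l⟩. -/

import Mathlib

open TensorProduct

variable {k : Type*} [Field k] {A : Type*} [AddCommGroup A] [Module k A]

/-- The multiplication on the dual space `A*` induced by a comultiplication `Δ`:
`⟨fg, a⟩ = Σ ⟨f, a₍₁₎⟩⟨g, a₍₂₎⟩`. -/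
noncomputable def dmul (Δ : A →ₗ[k] A ⊗[k] A) (f g : (A →ₗ[k] k)) : (A →ₗ[k] k) :=
  (TensorProduct.lid k k).toLinearMap ∘ₗ TensorProduct.map f g ∘ₗ Δ

/-- The left action `f·a = Σ a₍₁₎ ⟨f, a₍₂₎⟩` of the dual algebra on `A`. -/
noncomputable def lact (Δ : A →ₗ[k] A ⊗[k] A) (f : (A →ₗ[k] k)) : A →ₗ[k] A :=
  (TensorProduct.rid k A).toLinearMap ∘ₗ TensorProduct.map LinearMap.id f ∘ₗ Δ

/-- The right action `a·f = Σ ⟨f, a₍₁₎⟩ a₍₂₎` of the dual algebra on `A`. -/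
noncomputable def ract (Δ : A →ₗ[k] A ⊗[k] A) (f : (A →ₗ[k] k)) : A →ₗ[k] A :=
  (TensorProduct.lid k A).toLinearMap ∘ₗ TensorProduct.map f LinearMap.id ∘ₗ Δ

/-- `⟨A, Δ⟩` is a Jordan coalgebra: its dual algebra is commutative and satisfies
the Jordan identity `((ff)g)f = (ff)(gf)`. -/
def IsJordanCoalgebra (Δ : A →ₗ[k] A ⊗[k] A) : Prop :=
  (∀ f g : (A →ₗ[k] k), dmul Δ f g = dmul Δ g f) ∧
  (∀ f g : (A →ₗ[k] k),
    dmul Δ (dmul Δ (dmul Δ f f) g) f = dmul Δ (dmul Δ f f) (dmul Δ g f))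

/-- `B` is a subcoalgebra: `Δ(B) ⊆ B ⊗ B`. -/
def IsSubcoalgebra (Δ : A →ₗ[k] A ⊗[k] A) (B : Submodule k A) : Prop :=
  ∀ b ∈ B, Δ b ∈ LinearMap.range (TensorProduct.map B.subtype B.subtype)

/-- `B` is a coideal: `Δ(B) ⊆ B ⊗ A + A ⊗ B`. -/
def IsCoideal (Δ : A →ₗ[k] A ⊗[k] A) (B : Submodule k A) : Prop :=
  ∀ b ∈ B, Δ b ∈
    LinearMap.range (TensorProduct.map B.subtype (LinearMap.id (R := k) (M := A))) ⊔
    LinearMap.range (TensorProduct.map (LinearMap.id (R := k) (M := A)) B.subtype)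

/-- A derivation of the dual algebra `A*`. -/
def IsDerivation (Δ : A →ₗ[k] A ⊗[k] A)
    (d : (A →ₗ[k] k) →ₗ[k] (A →ₗ[k] k)) : Prop :=
  ∀ f g : (A →ₗ[k] k), d (dmul Δ f g) = dmul Δ (d f) g + dmul Δ f (d g)

theorem dmul_add_left (Δ : A →ₗ[k] A ⊗[k] A) (f₁ f₂ g : (A →ₗ[k] k)) :
    dmul Δ (f₁ + f₂) g = dmul Δ f₁ g + dmul Δ f₂ g := by
  unfold dmul; rw [TensorProduct.map_add_left]; ext a; simp

theorem dmul_add_right (Δ : A →ₗ[k] A ⊗[k] A) (f g₁ g₂ : (A →ₗ[k] k)) :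
    dmul Δ f (g₁ + g₂) = dmul Δ f g₁ + dmul Δ f g₂ := by
  unfold dmul; rw [TensorProduct.map_add_right]; ext a; simp

theorem dmul_smul_left (Δ : A →ₗ[k] A ⊗[k] A) (c : k) (f g : (A →ₗ[k] k)) :
    dmul Δ (c • f) g = c • dmul Δ f g := by
  unfold dmul; rw [TensorProduct.map_smul_left]; ext a; simp

theorem dmul_smul_right (Δ : A →ₗ[k] A ⊗[k] A) (c : k) (f g : (A →ₗ[k] k)) :
    dmul Δ f (c • g) = c • dmul Δ f g := by
  unfold dmul; rw [TensorProduct.map_smul_right]; ext a; simp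

theorem dmul_zero_left (Δ : A →ₗ[k] A ⊗[k] A) (g : (A →ₗ[k] k)) :
    dmul Δ (0 : (A →ₗ[k] k)) g = 0 := by
  ext a; simp [dmul]

theorem dmul_zero_right (Δ : A →ₗ[k] A ⊗[k] A) (f : (A →ₗ[k] k)) :
    dmul Δ f (0 : (A →ₗ[k] k)) = 0 := by
  ext a; simp [dmul]

/-- The operator of right multiplication `f' : g ↦ gf` on the dual algebra. -/
noncomputable def Rop (Δ : A →ₗ[k] A ⊗[k] A) (f : (A →ₗ[k] k)) :
    (A →ₗ[k] k) →ₗ[k] (A →ₗ[k] k) where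
  toFun g := dmul Δ g f
  map_add' g₁ g₂ := dmul_add_left Δ g₁ g₂ f
  map_smul' c g := dmul_smul_left Δ c g f

/-- The inner derivation `[f,g] = f'g' - g'f'` (in right-operator convention,
`x[f,g] = (xf)g - (xg)f`). -/
noncomputable def commD (Δ : A →ₗ[k] A ⊗[k] A) (f g : (A →ₗ[k] k)) :
    (A →ₗ[k] k) →ₗ[k] (A →ₗ[k] k) :=
  Rop Δ g ∘ₗ Rop Δ f - Rop Δ f ∘ₗ Rop Δ g

/-- The space of inner derivations of the dual algebra. -/
noncomputable def IntDer (Δ : A →ₗ[k] A ⊗[k] A) :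
    Submodule k ((A →ₗ[k] k) →ₗ[k] (A →ₗ[k] k)) :=
  Submodule.span k {d | ∃ f g : (A →ₗ[k] k), d = commD Δ f g}

/-- A weakly inner derivation of the dual algebra: a derivation that agrees with some
inner derivation on every finite-dimensional subcoalgebra. -/
def IsWIntDer (Δ : A →ₗ[k] A ⊗[k] A)
    (d : (A →ₗ[k] k) →ₗ[k] (A →ₗ[k] k)) : Prop :=
  IsDerivation Δ d ∧
  ∀ B : Submodule k A, IsSubcoalgebra Δ B → FiniteDimensional k B →
    ∃ i ∈ IntDer Δ, ∀ f : (A →ₗ[k] k), ∀ b ∈ B, d f b = i f b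

/-- The space of weakly inner derivations, as a submodule of `End(A*)`. -/
noncomputable def WIntDer (Δ : A →ₗ[k] A ⊗[k] A) :
    Submodule k ((A →ₗ[k] k) →ₗ[k] (A →ₗ[k] k)) where
  carrier := {d | IsWIntDer Δ d}
  zero_mem' := by
    refine ⟨fun f g => by simp [dmul_zero_left, dmul_zero_right],
      fun B hB hfin => ⟨0, Submodule.zero_mem _, fun f b hb => by simp⟩⟩
  add_mem' := by
    rintro d₁ d₂ ⟨hd₁, hw₁⟩ ⟨hd₂, hw₂⟩
    refine ⟨fun f g => ?_, fun B hB hfin => ?_⟩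
    · simp only [LinearMap.add_apply, hd₁ f g, hd₂ f g, dmul_add_left, dmul_add_right]
      abel
    · obtain ⟨i₁, hi₁, he₁⟩ := hw₁ B hB hfin
      obtain ⟨i₂, hi₂, he₂⟩ := hw₂ B hB hfin
      exact ⟨i₁ + i₂, Submodule.add_mem _ hi₁ hi₂, fun f b hb => by
        simp [LinearMap.add_apply, he₁ f b hb, he₂ f b hb]⟩
  smul_mem' := by
    rintro c d ⟨hd, hw⟩
    refine ⟨fun f g => ?_, fun B hB hfin => ?_⟩
    · simp only [LinearMap.smul_apply, hd f g, dmul_smul_left, dmul_smul_right, smul_add]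
    · obtain ⟨i, hi, he⟩ := hw B hB hfin
      exact ⟨c • i, Submodule.smul_mem _ c hi, fun f b hb => by
        simp [LinearMap.smul_apply, he f b hb]⟩
/-- Multiplication in the null extension `C = A* ⊕ A`. -/
noncomputable def cmul (Δ : A →ₗ[k] A ⊗[k] A) (x y : (A →ₗ[k] k) × A) :
    (A →ₗ[k] k) × A :=
  (dmul Δ x.1 y.1, lact Δ x.1 y.2 + lact Δ y.1 x.2)

theorem lact_add_left (Δ : A →ₗ[k] A ⊗[k] A) (f₁ f₂ : (A →ₗ[k] k)) (a : A) :
    lact Δ (f₁ + f₂) a = lact Δ f₁ a + lact Δ f₂ a := by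
  simp [lact, TensorProduct.map_add_right]

theorem lact_smul_left (Δ : A →ₗ[k] A ⊗[k] A) (c : k) (f : (A →ₗ[k] k)) (a : A) :
    lact Δ (c • f) a = c • lact Δ f a := by
  simp [lact, TensorProduct.map_smul_right]

/-- Right multiplication by an element of the null extension `C = A* ⊕ A`,
as a linear operator on `C`. -/
noncomputable def RopC (Δ : A →ₗ[k] A ⊗[k] A) (x : (A →ₗ[k] k) × A) :
    ((A →ₗ[k] k) × A) →ₗ[k] ((A →ₗ[k] k) × A) where
  toFun y := cmul Δ y x
  map_add' y z := by
    simp only [cmul, Prod.fst_add, Prod.snd_add, Prod.mk_add_mk, dmul_add_left,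
      lact_add_left, map_add]
    rw [Prod.mk.injEq]
    constructor
    · rfl
    · abel
  map_smul' c y := by
    simp only [cmul, Prod.smul_fst, Prod.smul_snd, Prod.smul_mk, dmul_smul_left,
      lact_smul_left, map_smul, RingHom.id_apply, smul_add]

/-- The operator `[x,y] = x'y' - y'x'` on the null extension `C`
(right-operator convention: `z[x,y] = (zx)y - (zy)x`). -/
noncomputable def commC (Δ : A →ₗ[k] A ⊗[k] A) (x y : (A →ₗ[k] k) × A) :
    ((A →ₗ[k] k) × A) →ₗ[k] ((A →ₗ[k] k) × A) :=
  RopC Δ y ∘ₗ RopC Δ x - RopC Δ x ∘ₗ RopC Δ y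

/-- The mixed commutator operator `[f,a]` on `C`, for `f ∈ A*` and `a ∈ A`. -/
noncomputable def commMixed (Δ : A →ₗ[k] A ⊗[k] A) (f : (A →ₗ[k] k)) (a : A) :
    ((A →ₗ[k] k) × A) →ₗ[k] ((A →ₗ[k] k) × A) :=
  commC Δ (f, 0) (0, a)

/-- The space `[A*, A]`, spanned by the mixed commutators, inside `End(C)`. -/
noncomputable def CommAA (Δ : A →ₗ[k] A ⊗[k] A) :
    Submodule k (((A →ₗ[k] k) × A) →ₗ[k] ((A →ₗ[k] k) × A)) :=
  Submodule.span k {u | ∃ (f : (A →ₗ[k] k)) (a : A), u = commMixed Δ f a}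

/-- The Kantor–Koecher–Tits bracket on `L(A*) = A* ⊕ (A*)' ⊕ WIntDer(A*) ⊕ Ā*`
(the third component is taken in `End(A*)`; for elements of `L(A*)` it lies in
`WIntDer(A*)`).  An element `(a, g, d, b)` represents `a + g' + d + b̄`. -/
noncomputable def bracketStar (Δ : A →ₗ[k] A ⊗[k] A)
    (l₁ l₂ : (A →ₗ[k] k) × (A →ₗ[k] k) × ((A →ₗ[k] k) →ₗ[k] (A →ₗ[k] k)) × (A →ₗ[k] k)) :
    (A →ₗ[k] k) × (A →ₗ[k] k) × ((A →ₗ[k] k) →ₗ[k] (A →ₗ[k] k)) × (A →ₗ[k] k) :=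
  (dmul Δ l₁.1 l₂.2.1 + l₂.2.2.1 l₁.1 - dmul Δ l₂.1 l₁.2.1 - l₁.2.2.1 l₂.1,
   dmul Δ l₁.1 l₂.2.2.2 - dmul Δ l₂.1 l₁.2.2.2 + l₂.2.2.1 l₁.2.1 - l₁.2.2.1 l₂.2.1,
   - commD Δ l₁.1 l₂.2.2.2 + commD Δ l₂.1 l₁.2.2.2 + commD Δ l₁.2.1 l₂.2.1
     + (l₂.2.2.1 ∘ₗ l₁.2.2.1 - l₁.2.2.1 ∘ₗ l₂.2.2.1),
   - dmul Δ l₁.2.2.2 l₂.2.1 + l₂.2.2.1 l₁.2.2.2 + dmul Δ l₂.2.2.2 l₁.2.1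
     - l₁.2.2.1 l₂.2.2.2)

/-- The involution `ε(a + c' + d + b̄) = b - c' + d + ā` on `L(A*)`. -/
def epsStar
    (l : (A →ₗ[k] k) × (A →ₗ[k] k) × ((A →ₗ[k] k) →ₗ[k] (A →ₗ[k] k)) × (A →ₗ[k] k)) :
    (A →ₗ[k] k) × (A →ₗ[k] k) × ((A →ₗ[k] k) →ₗ[k] (A →ₗ[k] k)) × (A →ₗ[k] k) :=
  (l.2.2.2, - l.2.1, l.2.2.1, l.1)

/-- The module action `[l, l*]` of `L(A*)` on `L(A) = A ⊕ A' ⊕ [A*,A] ⊕ Ā`.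
`Dex d` is the canonical extension of a weakly inner derivation `d` to `A`
(Proposition 2), passed as a parameter.  An element `(a, b, v, c)` of `L(A)`
represents `a + b' + v + c̄`. -/
noncomputable def actLL (Δ : A →ₗ[k] A ⊗[k] A)
    (Dex : ((A →ₗ[k] k) →ₗ[k] (A →ₗ[k] k)) → (A →ₗ[k] A))
    (l : A × A × (((A →ₗ[k] k) × A) →ₗ[k] ((A →ₗ[k] k) × A)) × A)
    (ls : (A →ₗ[k] k) × (A →ₗ[k] k) × ((A →ₗ[k] k) →ₗ[k] (A →ₗ[k] k)) × (A →ₗ[k] k)) :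
    A × A × (((A →ₗ[k] k) × A) →ₗ[k] ((A →ₗ[k] k) × A)) × A :=
  (lact Δ ls.2.1 l.1 + Dex ls.2.2.1 l.1 - lact Δ ls.1 l.2.1 - (l.2.2.1 (ls.1, 0)).2,
   ract Δ ls.2.2.2 l.1 - lact Δ ls.1 l.2.2.2 + Dex ls.2.2.1 l.2.1,
   commMixed Δ ls.2.2.2 l.1 + commMixed Δ ls.1 l.2.2.2 - commMixed Δ ls.2.1 l.2.1
     + (RopC Δ (ls.2.1, 0) ∘ₗ l.2.2.1 - l.2.2.1 ∘ₗ RopC Δ (ls.2.1, 0))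
     + ((LinearMap.prodMap ls.2.2.1 (Dex ls.2.2.1)) ∘ₗ l.2.2.1
        - l.2.2.1 ∘ₗ (LinearMap.prodMap ls.2.2.1 (Dex ls.2.2.1))),
   - lact Δ ls.2.1 l.2.2.2 + Dex ls.2.2.1 l.2.2.2 + lact Δ ls.2.2.2 l.2.1
     - (l.2.2.1 (ls.2.2.2, 0)).2)

/-- The natural pairing between `L(A*)` and `L(A)`, via the identification
`WIntDer(A*) ≅ ([A*,A])*` given by `φ` (Lemma 2). -/
noncomputable def pairSF (Δ : A →ₗ[k] A ⊗[k] A)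
    (φ : ↥(WIntDer Δ) →ₗ[k] (↥(CommAA Δ) →ₗ[k] k))
    (ls : (A →ₗ[k] k) × (A →ₗ[k] k) × ((A →ₗ[k] k) →ₗ[k] (A →ₗ[k] k)) × (A →ₗ[k] k))
    (l : A × A × (((A →ₗ[k] k) × A) →ₗ[k] ((A →ₗ[k] k) × A)) × A)
    (hd : ls.2.2.1 ∈ WIntDer Δ) (hv : l.2.2.1 ∈ CommAA Δ) : k :=
  ls.1 l.1 + ls.2.1 l.2.1 + φ ⟨ls.2.2.1, hd⟩ ⟨l.2.2.1, hv⟩ + ls.2.2.2 l.2.2.2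

/-!
Only finitely much of `l` is seen by `l*`: the components of `l` in `A`, and the mixed commutators
`[f, z]` making up its `[A*, A]`-component, involve finitely many points of `A`, and `[f, z]`
depends on `f` only through finitely many values. As `(d, Dex d)` acts on `[f, z]` by the Leibniz
rule, `[l, l*]` and `⟨l*, l⟩` depend on the derivation `d` of `l*` only through the restriction of
`φ d` to a finite-dimensional subspace `N` of `[A*, A]`. Inner derivations are derivations since
`A*` is Jordan, and they separate the points of `[A*, A]`, because `h (μ (g, b)).2 = φ [g, h] μ`.
By duality in `N` some inner `w` has `φ w = φ d` on `N`, and replacing `d` by `w` in `l*` gives `i`.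
-/

local notation "L" => AddMonoid.End.mulLeft

theorem IsCommJordan.lie_lmul_lmul_add_add_eq_zero {J : Type*} [NonUnitalNonAssocCommRing J]
    [IsCommJordan J] (h2 : ∀ x : J, 2 • x = 0 → x = 0) (a b c : J) :
    ⁅L a, L (b * c)⁆ + ⁅L b, L (c * a)⁆ + ⁅L c, L (a * b)⁆ = 0 :=
  AddMonoidHom.ext fun x =>
    h2 _ (DFunLike.congr_fun (two_nsmul_lie_lmul_lmul_add_add_eq_zero a b c) x)

theorem IsCommJordan.lie_lmul_lmul_apply_mul {J : Type*} [NonUnitalNonAssocCommRing J]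
    [IsCommJordan J] (h2 : ∀ x : J, 2 • x = 0 → x = 0) (a b x y : J) :
    ⁅L a, L b⁆ (x * y) = ⁅L a, L b⁆ x * y + x * ⁅L a, L b⁆ y := by
  have e₁ : a * (x * y * b) - x * y * (a * b) + (x * (y * a * b) - y * a * (x * b))
      + (y * (a * x * b) - a * x * (y * b)) = 0 :=
    DFunLike.congr_fun (lie_lmul_lmul_add_add_eq_zero h2 a x y) b
  have e₂ : b * (x * y * a) - x * y * (b * a) + (x * (y * b * a) - y * b * (x * a))
      + (y * (b * x * a) - b * x * (y * a)) = 0 :=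
    DFunLike.congr_fun (lie_lmul_lmul_add_add_eq_zero h2 b x y) a
  change a * (b * (x * y)) - b * (a * (x * y))
    = (a * (b * x) - b * (a * x)) * y + x * (a * (b * y) - b * (a * y))
  rw [← sub_eq_zero, ← sub_eq_zero_of_eq (e₁.trans e₂.symm)]
  simp only [mul_sub, sub_mul]
  simp only [mul_comm]
  abel

section DualAlgebra

variable (Δ : A →ₗ[k] A ⊗[k] A)

noncomputable abbrev dualRing (hc : ∀ f g : A →ₗ[k] k, dmul Δ f g = dmul Δ g f) :
    NonUnitalNonAssocCommRing (A →ₗ[k] k) :=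
  { (inferInstance : AddCommGroup (A →ₗ[k] k)) with
    mul := dmul Δ
    left_distrib := dmul_add_right Δ
    right_distrib := dmul_add_left Δ
    zero_mul := dmul_zero_left Δ
    mul_zero := dmul_zero_right Δ
    mul_comm := hc }

theorem commD_isDerivation (h2 : (2 : k) ≠ 0) (hJ : IsJordanCoalgebra Δ) (p q : A →ₗ[k] k) :
    IsDerivation Δ (commD Δ p q) := by
  obtain ⟨hc, hJ₂⟩ := hJ
  let _ := dualRing Δ hc
  have _ : IsCommJordan (A →ₗ[k] k) := ⟨fun a b => by
    change dmul Δ (dmul Δ a b) (dmul Δ a a) = dmul Δ a (dmul Δ b (dmul Δ a a))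
    rw [hc (dmul Δ a b), hc a b, ← hJ₂, hc (dmul Δ (dmul Δ a a) b) a, hc (dmul Δ a a) b]⟩
  have h2' : ∀ x : A →ₗ[k] k, 2 • x = 0 → x = 0 := fun x hx => by
    rw [two_nsmul, ← two_smul k] at hx
    exact (smul_eq_zero.mp hx).resolve_left h2
  have hL : ∀ x, commD Δ p q x = ⁅L q, L p⁆ x := fun x => by
    change (x * p) * q - (x * q) * p = q * (p * x) - p * (q * x)
    simp only [mul_comm]
  intro f g
  rw [hL, hL, hL]
  exact IsCommJordan.lie_lmul_lmul_apply_mul h2' q p f g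

theorem commD_mem_IntDer (p q : A →ₗ[k] k) : commD Δ p q ∈ IntDer Δ :=
  Submodule.subset_span ⟨p, q, rfl⟩

theorem commD_mem_WIntDer (h2 : (2 : k) ≠ 0) (hJ : IsJordanCoalgebra Δ) (p q : A →ₗ[k] k) :
    commD Δ p q ∈ WIntDer Δ :=
  ⟨commD_isDerivation Δ h2 hJ p q, fun _ _ _ => ⟨_, commD_mem_IntDer Δ p q, fun _ _ _ => rfl⟩⟩

end DualAlgebra

section Sweedler

variable (Δ : A →ₗ[k] A ⊗[k] A)

theorem apply_lact (h f : A →ₗ[k] k) (z : A) : h (lact Δ f z) = dmul Δ h f z := by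
  have key : ∀ t : A ⊗[k] A, h (TensorProduct.rid k A (TensorProduct.map LinearMap.id f t)) =
      TensorProduct.lid k k (TensorProduct.map h f t) := by
    intro t
    induction t using TensorProduct.induction_on with
    | zero => simp
    | tmul a b => simp [mul_comm]
    | add x y hx hy => simp [hx, hy]
  simpa [lact, dmul] using key (Δ z)

variable {Δ}

theorem lact_eq_sum {x : A} {s : Finset (A × A)} (hs : Δ x = ∑ p ∈ s, p.1 ⊗ₜ[k] p.2)
    (f : A →ₗ[k] k) : lact Δ f x = ∑ p ∈ s, f p.2 • p.1 := by
  simp [lact, hs, map_sum]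

theorem dmul_apply_eq_sum {x : A} {s : Finset (A × A)} (hs : Δ x = ∑ p ∈ s, p.1 ⊗ₜ[k] p.2)
    (f g : A →ₗ[k] k) : dmul Δ f g x = ∑ p ∈ s, f p.1 * g p.2 := by
  simp [dmul, hs, map_sum]

variable (Δ)

theorem lact_zero_left : lact Δ (0 : A →ₗ[k] k) = 0 := by
  ext; simp [lact]

theorem commMixed_apply (f : A →ₗ[k] k) (a : A) (y : (A →ₗ[k] k) × A) :
    commMixed Δ f a y = (0, lact Δ (dmul Δ y.1 f) a - lact Δ f (lact Δ y.1 a)) := by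
  simp [commMixed, commC, RopC, cmul, dmul_zero_left, dmul_zero_right, lact_zero_left]

-- In Sweedler notation `[f, z]` sends `g` to `Σ (gf)(z₂) z₁ - Σ g(z₂) f·z₁`, which only involves
-- the values of `f` on second legs of `Δ z₁` and `Δ z₂`.
theorem exists_finset_commMixed_eq_zero (z : A) :
    ∃ Y : Finset A, ∀ f : A →ₗ[k] k, (∀ y ∈ Y, f y = 0) → commMixed Δ f z = 0 := by
  classical
  choose S hS using fun x : A => TensorProduct.exists_finset (Δ x)
  refine ⟨(S z).biUnion fun p => (S p.1 ∪ S p.2).image Prod.snd, fun f hf => ?_⟩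
  have hf' : ∀ p ∈ S z, ∀ r ∈ S p.1 ∪ S p.2, f r.2 = 0 := fun p hp r hr =>
    hf _ (Finset.mem_biUnion.2 ⟨p, hp, Finset.mem_image_of_mem _ hr⟩)
  refine LinearMap.ext fun y => ?_
  rw [commMixed_apply, LinearMap.zero_apply, Prod.mk_eq_zero, lact_eq_sum (hS z),
    lact_eq_sum (hS z), map_sum, sub_eq_zero]
  refine ⟨rfl, Finset.sum_congr rfl fun p hp => ?_⟩
  rw [dmul_apply_eq_sum (hS p.2), map_smul, lact_eq_sum (hS p.1),
    Finset.sum_eq_zero fun r hr => by rw [hf' p hp r (Finset.mem_union_right _ hr), mul_zero],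
    Finset.sum_eq_zero fun r hr => by rw [hf' p hp r (Finset.mem_union_left _ hr), zero_smul]]
  simp

end Sweedler

theorem LinearMap.range_fg_of_ker_le {K V V' W : Type*} [Field K]
    [AddCommGroup V] [Module K V] [AddCommGroup V'] [Module K V'] [FiniteDimensional K V']
    [AddCommMonoid W] [Module K W] (E : V →ₗ[K] V') (T : V →ₗ[K] W) (h : ker E ≤ ker T) :
    (range T).FG := by
  obtain ⟨S, hS⟩ := Submodule.exists_isCompl (ker E)
  have : FiniteDimensional K S := Module.Finite.of_injective (E.domRestrict S) <| by
    rw [← LinearMap.ker_eq_bot, LinearMap.ker_domRestrict,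
      ← Submodule.disjoint_iff_comap_eq_bot]
    exact hS.disjoint.symm
  rw [LinearMap.range_eq_map, ← hS.sup_eq_top, Submodule.map_sup,
    LinearMap.le_ker_iff_map.1 h, bot_sup_eq]
  exact (Module.Finite.iff_fg.1 this).map T

section MixedSpan

variable (Δ : A →ₗ[k] A ⊗[k] A)

noncomputable def commMixedLeft (z : A) :
    (A →ₗ[k] k) →ₗ[k] ((A →ₗ[k] k) × A →ₗ[k] (A →ₗ[k] k) × A) where
  toFun f := commMixed Δ f z
  map_add' f g := LinearMap.ext fun y => by
    simp only [commMixed_apply, dmul_add_right, lact_add_left, LinearMap.add_apply,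
      Prod.mk_add_mk, add_zero]
    abel_nf
  map_smul' c f := LinearMap.ext fun y => by
    simp [commMixed_apply, dmul_smul_right, lact_smul_left, smul_sub]

theorem range_commMixedLeft_fg (z : A) : (LinearMap.range (commMixedLeft Δ z)).FG := by
  obtain ⟨Y, hY⟩ := exists_finset_commMixed_eq_zero Δ z
  refine LinearMap.range_fg_of_ker_le
    (LinearMap.pi fun y : Y => Module.Dual.eval k A y : (A →ₗ[k] k) →ₗ[k] Y → k) _
    fun f hf => hY f fun y hy => congr_fun (LinearMap.mem_ker.1 hf) ⟨y, hy⟩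

noncomputable def mixedSpan (P : Finset A) :
    Submodule k ((A →ₗ[k] k) × A →ₗ[k] (A →ₗ[k] k) × A) :=
  ⨆ z : P, LinearMap.range (commMixedLeft Δ z)

instance (P : Finset A) : Module.Finite k (mixedSpan Δ P) :=
  Module.Finite.iff_fg.2 <| Submodule.fg_iSup _ fun z => range_commMixedLeft_fg Δ z

theorem commMixed_mem_mixedSpan {P : Finset A} {z : A} (hz : z ∈ P) (f : A →ₗ[k] k) :
    commMixed Δ f z ∈ mixedSpan Δ P :=
  le_iSup (fun z : P => LinearMap.range (commMixedLeft Δ z)) ⟨z, hz⟩ ⟨f, rfl⟩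

theorem mixedSpan_le_commAA (P : Finset A) : mixedSpan Δ P ≤ CommAA Δ :=
  iSup_le fun z => by
    rintro _ ⟨f, rfl⟩
    exact Submodule.subset_span ⟨f, z, rfl⟩

theorem mixedSpan_mono {P Q : Finset A} (h : P ⊆ Q) : mixedSpan Δ P ≤ mixedSpan Δ Q :=
  iSup_le fun z => le_iSup_of_le (⟨z, h z.2⟩ : Q) le_rfl

theorem exists_finset_mem_mixedSpan {u : (A →ₗ[k] k) × A →ₗ[k] (A →ₗ[k] k) × A}
    (hu : u ∈ CommAA Δ) : ∃ P : Finset A, u ∈ mixedSpan Δ P := by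
  have hle : CommAA Δ ≤ ⨆ z, LinearMap.range (commMixedLeft Δ z) := by
    refine Submodule.span_le.2 ?_
    rintro _ ⟨f, z, rfl⟩
    exact le_iSup (fun z => LinearMap.range (commMixedLeft Δ z)) z ⟨f, rfl⟩
  obtain ⟨P, hP⟩ := Submodule.exists_finset_of_mem_iSup _ (hle hu)
  exact ⟨P, by rwa [iSup_subtype'] at hP⟩

@[elab_as_elim]
theorem mixedSpan_induction {P : Finset A}
    {motive : ((A →ₗ[k] k) × A →ₗ[k] (A →ₗ[k] k) × A) → Prop}
    (mem : ∀ z ∈ P, ∀ f, motive (commMixed Δ f z)) (zero : motive 0)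
    (add : ∀ μ ν, motive μ → motive ν → motive (μ + ν)) {μ} (hμ : μ ∈ mixedSpan Δ P) :
    motive μ :=
  Submodule.iSup_induction _ (motive := motive) hμ (fun z _ ⟨f, hf⟩ => hf ▸ mem z z.2 f) zero add

end MixedSpan

-- Stated for additive monoids `V`: instance search does not find the additive group structure on
-- submodules of `Module.End k ((A →ₗ[k] k) × A)`, to which this is applied.
theorem Submodule.exists_mem_map_eq_of_forall {K V E : Type*} [Field K] [AddCommMonoid V]
    [Module K V] [Module.Finite K V] [AddCommMonoid E] [Module K E] (R : E →ₗ[K] V →ₗ[K] K)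
    (W : Submodule K E) (x : E) (h : ∀ v, (∀ w ∈ W, R w v = 0) → R x v = 0) :
    ∃ w ∈ W, R w = R x := by
  let _ := Module.addCommMonoidToAddCommGroup K (M := V)
  have hx : R x ∈ (W.map R).dualCoannihilator.dualAnnihilator := by
    rw [Submodule.mem_dualAnnihilator]
    exact fun v hv =>
      h v fun w hw => (Submodule.mem_dualCoannihilator _).1 hv _ (Submodule.mem_map_of_mem hw)
  rwa [Subspace.dualCoannihilator_dualAnnihilator_eq] at hx

section Pairing

variable {Δ : A →ₗ[k] A ⊗[k] A} {φ : ↥(WIntDer Δ) →ₗ[k] (↥(CommAA Δ) →ₗ[k] k)}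

theorem apply_commMixed_apply_snd (hc : ∀ f g : A →ₗ[k] k, dmul Δ f g = dmul Δ g f)
    (f : A →ₗ[k] k) (a : A) (y : (A →ₗ[k] k) × A) (h : A →ₗ[k] k) :
    h (commMixed Δ f a y).2 = commD Δ y.1 h f a := by
  rw [commMixed_apply, map_sub, apply_lact, apply_lact, apply_lact, hc h, hc y.1 f, hc h f]
  rfl

theorem commAA_apply_fst {μ : (A →ₗ[k] k) × A →ₗ[k] (A →ₗ[k] k) × A} (hμ : μ ∈ CommAA Δ)
    (y : (A →ₗ[k] k) × A) : (μ y).1 = 0 := by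
  induction hμ using Submodule.span_induction with
  | mem v hv => obtain ⟨f, a, rfl⟩ := hv; rw [commMixed_apply]
  | zero => rfl
  | add v w _ _ hv hw => simp [hv, hw]
  | smul c v _ hv => simp [hv]

theorem apply_snd_eq_phi_commD (hc : ∀ f g : A →ₗ[k] k, dmul Δ f g = dmul Δ g f)
    (hφ : ∀ (e : ↥(WIntDer Δ)) (f : A →ₗ[k] k) (a : A) (h : commMixed Δ f a ∈ CommAA Δ),
      φ e ⟨commMixed Δ f a, h⟩ = (e : ((A →ₗ[k] k) →ₗ[k] (A →ₗ[k] k))) f a)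
    {μ : (A →ₗ[k] k) × A →ₗ[k] (A →ₗ[k] k) × A} (hμ : μ ∈ CommAA Δ)
    (y : (A →ₗ[k] k) × A) (h : A →ₗ[k] k) (he : commD Δ y.1 h ∈ WIntDer Δ) :
    h (μ y).2 = φ ⟨commD Δ y.1 h, he⟩ ⟨μ, hμ⟩ := by
  induction hμ using Submodule.span_induction with
  | mem v hv =>
    obtain ⟨f, a, rfl⟩ := hv
    exact (apply_commMixed_apply_snd hc f a y h).trans (hφ ⟨_, he⟩ f a _).symm
  | zero => exact (map_zero h).trans (map_zero _).symm
  | add u v hu hv ihu ihv =>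
    rw [LinearMap.add_apply, Prod.snd_add, map_add, ihu, ihv, ← map_add]; rfl
  | smul c u hu ih => rw [LinearMap.smul_apply, Prod.smul_snd, map_smul, ih, ← map_smul]; rfl

theorem eq_zero_of_forall_phi_commD_eq_zero (h2 : (2 : k) ≠ 0) (hJ : IsJordanCoalgebra Δ)
    (hφ : ∀ (e : ↥(WIntDer Δ)) (f : A →ₗ[k] k) (a : A) (h : commMixed Δ f a ∈ CommAA Δ),
      φ e ⟨commMixed Δ f a, h⟩ = (e : ((A →ₗ[k] k) →ₗ[k] (A →ₗ[k] k))) f a)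
    {μ : (A →ₗ[k] k) × A →ₗ[k] (A →ₗ[k] k) × A} (hμ : μ ∈ CommAA Δ)
    (h : ∀ p q, φ ⟨commD Δ p q, commD_mem_WIntDer Δ h2 hJ p q⟩ ⟨μ, hμ⟩ = 0) : μ = 0 := by
  refine LinearMap.ext fun y => Prod.ext (commAA_apply_fst hμ y) ?_
  refine (Module.forall_dual_apply_eq_zero_iff k _).1 fun g => ?_
  rw [apply_snd_eq_phi_commD hJ.1 hφ hμ y g (commD_mem_WIntDer Δ h2 hJ _ _), h]

-- Inner derivations separate the points of `[A*, A]`, so on the finite-dimensional `mixedSpan Δ P`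
-- their images under `φ` exhaust the dual space.
theorem exists_intDer_phi_eq (h2 : (2 : k) ≠ 0) (hJ : IsJordanCoalgebra Δ)
    (hφ : ∀ (e : ↥(WIntDer Δ)) (f : A →ₗ[k] k) (a : A) (h : commMixed Δ f a ∈ CommAA Δ),
      φ e ⟨commMixed Δ f a, h⟩ = (e : ((A →ₗ[k] k) →ₗ[k] (A →ₗ[k] k))) f a)
    (d : ↥(WIntDer Δ)) (P : Finset A) :
    ∃ w ∈ IntDer Δ, ∃ hw : w ∈ WIntDer Δ, ∀ μ (hμ : μ ∈ mixedSpan Δ P),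
      φ ⟨w, hw⟩ ⟨μ, mixedSpan_le_commAA Δ P hμ⟩ = φ d ⟨μ, mixedSpan_le_commAA Δ P hμ⟩ := by
  let R : ↥(WIntDer Δ) →ₗ[k] (mixedSpan Δ P →ₗ[k] k) :=
    (LinearMap.lcomp k k (Submodule.inclusion (mixedSpan_le_commAA Δ P))).comp φ
  obtain ⟨w, hw, hRw⟩ := Submodule.exists_mem_map_eq_of_forall R
    ((IntDer Δ).comap (WIntDer Δ).subtype) d fun μ hμ => by
      have : (μ : (A →ₗ[k] k) × A →ₗ[k] (A →ₗ[k] k) × A) = 0 :=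
        eq_zero_of_forall_phi_commD_eq_zero h2 hJ hφ _ fun p q =>
          hμ ⟨_, commD_mem_WIntDer Δ h2 hJ p q⟩ (commD_mem_IntDer Δ p q)
      rw [show μ = 0 from Subtype.ext this, map_zero]
  exact ⟨w, hw, w.2, fun μ hμ => LinearMap.congr_fun hRw ⟨μ, hμ⟩⟩

end Pairing

section Extension

variable {Δ : A →ₗ[k] A ⊗[k] A} {Dex : ((A →ₗ[k] k) →ₗ[k] (A →ₗ[k] k)) → (A →ₗ[k] A)}

theorem dex_eq_of_forall_apply_eq
    (hDex : ∀ d, d ∈ WIntDer Δ → ∀ (f : A →ₗ[k] k) (a : A), f (Dex d a) = - d f a)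
    {d w : (A →ₗ[k] k) →ₗ[k] (A →ₗ[k] k)} (hd : d ∈ WIntDer Δ) (hw : w ∈ WIntDer Δ) {z : A}
    (h : ∀ f, d f z = w f z) : Dex d z = Dex w z := by
  rw [← sub_eq_zero]
  refine (Module.forall_dual_apply_eq_zero_iff k _).1 fun f => ?_
  rw [map_sub, hDex d hd, hDex w hw, h, sub_self]

theorem dex_lact
    (hDex : ∀ d, d ∈ WIntDer Δ → ∀ (f : A →ₗ[k] k) (a : A), f (Dex d a) = - d f a)
    {d : (A →ₗ[k] k) →ₗ[k] (A →ₗ[k] k)} (hd : d ∈ WIntDer Δ) (f : A →ₗ[k] k) (b : A) :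
    Dex d (lact Δ f b) = lact Δ (d f) b + lact Δ f (Dex d b) := by
  rw [← sub_eq_zero]
  refine (Module.forall_dual_apply_eq_zero_iff k _).1 fun h => ?_
  rw [map_sub, map_add, hDex d hd, apply_lact, apply_lact, apply_lact, hDex d hd, hd.1 h f,
    LinearMap.add_apply]
  ring

-- `(d, Dex d)` is a derivation of the null extension (`dex_lact`), so it acts on `[f, z]` by the
-- Leibniz rule.
theorem prodMap_comp_commMixed_sub
    (hDex : ∀ d, d ∈ WIntDer Δ → ∀ (f : A →ₗ[k] k) (a : A), f (Dex d a) = - d f a)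
    {d : (A →ₗ[k] k) →ₗ[k] (A →ₗ[k] k)} (hd : d ∈ WIntDer Δ) (f : A →ₗ[k] k) (z : A) :
    LinearMap.prodMap d (Dex d) ∘ₗ commMixed Δ f z - commMixed Δ f z ∘ₗ LinearMap.prodMap d (Dex d)
      = commMixed Δ (d f) z + commMixed Δ f (Dex d z) := by
  refine LinearMap.ext fun y => ?_
  simp only [LinearMap.sub_apply, LinearMap.add_apply, LinearMap.comp_apply, commMixed_apply,
    LinearMap.prodMap_apply, map_sub, dex_lact hDex hd, hd.1 y.1 f, lact_add_left, map_add,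
    map_zero, Prod.mk_sub_mk, Prod.mk_add_mk]
  congr 1 <;> abel

theorem prodMap_comp_sub_eq_of_mem_mixedSpan
    (hDex : ∀ d, d ∈ WIntDer Δ → ∀ (f : A →ₗ[k] k) (a : A), f (Dex d a) = - d f a)
    {d w : (A →ₗ[k] k) →ₗ[k] (A →ₗ[k] k)} (hd : d ∈ WIntDer Δ) (hw : w ∈ WIntDer Δ)
    {P : Finset A} (hdex : ∀ z ∈ P, Dex d z = Dex w z)
    (hmix : ∀ z ∈ P, ∀ f, commMixed Δ (d f) z = commMixed Δ (w f) z)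
    {μ : (A →ₗ[k] k) × A →ₗ[k] (A →ₗ[k] k) × A} (hμ : μ ∈ mixedSpan Δ P) :
    LinearMap.prodMap d (Dex d) ∘ₗ μ - μ ∘ₗ LinearMap.prodMap d (Dex d)
      = LinearMap.prodMap w (Dex w) ∘ₗ μ - μ ∘ₗ LinearMap.prodMap w (Dex w) := by
  refine mixedSpan_induction Δ (fun z hz f => ?_) ?_ (fun μ ν hμ hν => ?_) hμ
  · rw [prodMap_comp_commMixed_sub hDex hd, prodMap_comp_commMixed_sub hDex hw, hdex z hz,
      hmix z hz f]
  · simp only [LinearMap.comp_zero, LinearMap.zero_comp]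
  · calc _ = (LinearMap.prodMap d (Dex d) ∘ₗ μ - μ ∘ₗ LinearMap.prodMap d (Dex d))
          + (LinearMap.prodMap d (Dex d) ∘ₗ ν - ν ∘ₗ LinearMap.prodMap d (Dex d)) := by
          rw [LinearMap.comp_add, LinearMap.add_comp]; abel
      _ = _ := by rw [hμ, hν, LinearMap.comp_add, LinearMap.add_comp]; abel

end Extension

theorem lemma4_inner_approx_general {k : Type*} [Field k] {A : Type*} [AddCommGroup A] [Module k A]
    (h2 : (2 : k) ≠ 0) (Δ : A →ₗ[k] A ⊗[k] A) (hJ : IsJordanCoalgebra Δ)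
    (φ : ↥(WIntDer Δ) →ₗ[k] (↥(CommAA Δ) →ₗ[k] k))
    (hφ : ∀ (e : ↥(WIntDer Δ)) (f : A →ₗ[k] k) (a : A) (h : commMixed Δ f a ∈ CommAA Δ),
      φ e ⟨commMixed Δ f a, h⟩ = (e : ((A →ₗ[k] k) →ₗ[k] (A →ₗ[k] k))) f a)
    (Dex : ((A →ₗ[k] k) →ₗ[k] (A →ₗ[k] k)) → (A →ₗ[k] A))
    (hDex : ∀ d, d ∈ WIntDer Δ → ∀ (f : A →ₗ[k] k) (a : A), f (Dex d a) = - d f a)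
    (ls : (A →ₗ[k] k) × (A →ₗ[k] k) × ((A →ₗ[k] k) →ₗ[k] (A →ₗ[k] k)) × (A →ₗ[k] k))
    (l : A × A × (((A →ₗ[k] k) × A) →ₗ[k] ((A →ₗ[k] k) × A)) × A)
    (hd : ls.2.2.1 ∈ WIntDer Δ) (hl : l.2.2.1 ∈ CommAA Δ) :
    ∃ (i : (A →ₗ[k] k) × (A →ₗ[k] k) × ((A →ₗ[k] k) →ₗ[k] (A →ₗ[k] k)) × (A →ₗ[k] k)),
      i.2.2.1 ∈ IntDer Δ ∧
      ∃ hiw : i.2.2.1 ∈ WIntDer Δ,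
        actLL Δ Dex l ls = actLL Δ Dex l i ∧
        pairSF Δ φ ls l hd hl = pairSF Δ φ i l hiw hl := by
  classical
  obtain ⟨P₀, hv⟩ := exists_finset_mem_mixedSpan Δ hl
  choose Y hY using exists_finset_commMixed_eq_zero Δ
  set P : Finset A := {l.1, l.2.1, l.2.2.2} ∪ P₀ ∪ P₀.biUnion Y with hP
  have hP₀ : P₀ ⊆ P := fun z hz => by simp [hP, hz]
  obtain ⟨w, hwInt, hw, hφw⟩ := exists_intDer_phi_eq h2 hJ hφ ⟨_, hd⟩ P
  have happly : ∀ z ∈ P, ∀ f, ls.2.2.1 f z = w f z := fun z hz f => by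
    rw [← hφ ⟨w, hw⟩ f z, ← hφ ⟨_, hd⟩ f z]
    exact (hφw _ (commMixed_mem_mixedSpan Δ hz f)).symm
  have hdex : ∀ z ∈ P, Dex ls.2.2.1 z = Dex w z := fun z hz =>
    dex_eq_of_forall_apply_eq hDex hd hw (happly z hz)
  have hmix : ∀ z ∈ P₀, ∀ f, commMixed Δ (ls.2.2.1 f) z = commMixed Δ (w f) z := by
    intro z hz f
    have hY' : ∀ y ∈ Y z, y ∈ P := fun y hy =>
      Finset.mem_union_right _ (Finset.mem_biUnion.2 ⟨z, hz, hy⟩)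
    rw [← sub_eq_zero]
    refine (map_sub (commMixedLeft Δ z) _ _).symm.trans (hY z _ fun y hy => ?_)
    rw [LinearMap.sub_apply, happly y (hY' y hy) f, sub_self]
  refine ⟨(ls.1, ls.2.1, w, ls.2.2.2), hwInt, hw, ?_, ?_⟩
  · simp only [actLL]
    rw [hdex l.1 (by simp [hP]), hdex l.2.1 (by simp [hP]), hdex l.2.2.2 (by simp [hP]),
      prodMap_comp_sub_eq_of_mem_mixedSpan hDex hd hw (fun z hz => hdex z (hP₀ hz)) hmix hv]
  · simp only [pairSF]
    rw [hφw _ (mixedSpan_mono Δ hP₀ hv)]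

/-- **Lemma 4.** For every `l* ∈ L(A*)` and `l ∈ L(A)` there is an element `i` of the ideal
`I(A*) = A* ⊕ (A*)' ⊕ IntDer(A*) ⊕ Ā*` with `[l, l*] = [l, i]` and `⟨l*, l⟩ = ⟨i, l⟩`. -/
theorem lemma4_inner_approx {k : Type*} [Field k] {A : Type*} [AddCommGroup A] [Module k A]
    (h2 : (2 : k) ≠ 0) (Δ : A →ₗ[k] A ⊗[k] A) (hJ : IsJordanCoalgebra Δ)
    (one : A →ₗ[k] k) (hone : ∀ f, dmul Δ one f = f ∧ dmul Δ f one = f)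
    (φ : ↥(WIntDer Δ) →ₗ[k] (↥(CommAA Δ) →ₗ[k] k))
    (hφ : ∀ (e : ↥(WIntDer Δ)) (f : A →ₗ[k] k) (a : A) (h : commMixed Δ f a ∈ CommAA Δ),
      φ e ⟨commMixed Δ f a, h⟩ = (e : ((A →ₗ[k] k) →ₗ[k] (A →ₗ[k] k))) f a)
    (hφbij : Function.Bijective φ)
    (Dex : ((A →ₗ[k] k) →ₗ[k] (A →ₗ[k] k)) → (A →ₗ[k] A))
    (hDex : ∀ d, d ∈ WIntDer Δ → ∀ (f : A →ₗ[k] k) (a : A), f (Dex d a) = - d f a)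
    (ls : (A →ₗ[k] k) × (A →ₗ[k] k) × ((A →ₗ[k] k) →ₗ[k] (A →ₗ[k] k)) × (A →ₗ[k] k))
    (l : A × A × (((A →ₗ[k] k) × A) →ₗ[k] ((A →ₗ[k] k) × A)) × A)
    (hd : ls.2.2.1 ∈ WIntDer Δ) (hl : l.2.2.1 ∈ CommAA Δ) :
    ∃ (i : (A →ₗ[k] k) × (A →ₗ[k] k) × ((A →ₗ[k] k) →ₗ[k] (A →ₗ[k] k)) × (A →ₗ[k] k)),
      i.2.2.1 ∈ IntDer Δ ∧
      ∃ hiw : i.2.2.1 ∈ WIntDer Δ,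
        actLL Δ Dex l ls = actLL Δ Dex l i ∧
        pairSF Δ φ ls l hd hl = pairSF Δ φ i l hiw hl :=
  lemma4_inner_approx_general h2 Δ hJ φ hφ Dex hDex ls l hd hl
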